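/- arXiv:math/0607816 — 2 statements merged into one kernel-verified Lean document; each statement's English description precedes it below -/
import Mathlib

section
/- Let {b_n} be a sequence of positive reals such that ∑ b_n^{-p-1} converges absolutely for some positive integer p, and let a > 0. Then ∑_{n=1}^∞ ∑_{j=1}^{p} ((-1)^j/j) a^j ( z^j/(a+b_n)^j − (1+z)^j/b_n^j + 1/b_n^j ) = ∑_{k=1}^{p} E^p_k(a) z^k, where E^p_k(a) = ∑_{n=1}^∞ ( ((-1)^k/k) a^k/(a+b_n)^k − ∑_{j=k}^{p} ((-1)^j/j) C(j,k) a^j/b_n^j ). -/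
/-!
Expanding `(1 + z) ^ j` binomially and exchanging the two finite sums turns the `n`-th summand
into a polynomial in `z` whose `k`-th coefficient is the `n`-th term of `E^p_k(a)`. With
`x = a / b_n ≥ 0`, that term is `(-1)^k x^k / k` times the remainder of the degree `p - k` Taylor
polynomial of `(1 + x)^(-k)`, which is `O(x ^ (p - k + 1))`. So each coefficient is `O(b_n^(-p-1))`,
its series converges by comparison with `∑ b_n^(-p-1)`, and the sum over `n` splits over `k`.
-/

open Finset

theorem sum_range_choose_mul_neg_pow_eq (k M : ℕ) (x : ℝ) :
    ∑ m ∈ range M, ((m + k).choose k : ℝ) * (-x) ^ m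
      = (1 + x) * ∑ m ∈ range M, ((m + k + 1).choose (k + 1) : ℝ) * (-x) ^ m
        + ((M + k).choose (k + 1) : ℝ) * (-x) ^ M := by
  induction M with
  | zero => simp
  | succ M ih =>
    rw [sum_range_succ, sum_range_succ, ih, show M + 1 + k = M + k + 1 by omega,
      Nat.choose_succ_succ (M + k) k, pow_succ]
    push_cast
    ring

theorem abs_inv_one_add_pow_sub_sum_le (k M : ℕ) {x : ℝ} (hx : 0 ≤ x) :
    |((1 + x) ^ (k + 1))⁻¹ - ∑ m ∈ range M, ((m + k).choose k : ℝ) * (-x) ^ m|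
      ≤ (M + k).choose k * x ^ M := by
  have hx1 : 0 < 1 + x := by linarith
  induction k with
  | zero =>
    have hgeom : (1 + x) * ∑ m ∈ range M, (-x) ^ m = 1 - (-x) ^ M := by
      simpa using mul_neg_geom_sum (-x) M
    have : ((1 + x) ^ 1)⁻¹ - ∑ m ∈ range M, ((m + 0).choose 0 : ℝ) * (-x) ^ m
        = (-x) ^ M / (1 + x) := by
      simp only [add_zero, Nat.choose_zero_right, Nat.cast_one, one_mul, pow_one]
      rw [eq_div_iff hx1.ne', sub_mul, inv_mul_cancel₀ hx1.ne', mul_comm, hgeom]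
      ring
    rw [this, abs_div, abs_of_pos hx1, abs_pow, abs_neg, abs_of_nonneg hx]
    simpa using div_le_self (pow_nonneg hx M) (by linarith : (1 : ℝ) ≤ 1 + x)
  | succ k ih =>
    have hrec : ((1 + x) ^ (k + 2))⁻¹
          - ∑ m ∈ range M, ((m + (k + 1)).choose (k + 1) : ℝ) * (-x) ^ m
        = (((1 + x) ^ (k + 1))⁻¹ - ∑ m ∈ range M, ((m + k).choose k : ℝ) * (-x) ^ m
            + ((M + k).choose (k + 1) : ℝ) * (-x) ^ M) / (1 + x) := by
      rw [sum_range_choose_mul_neg_pow_eq k M x]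
      field_simp
      simp only [← add_assoc]
      ring
    rw [hrec, abs_div, abs_of_pos hx1, show M + (k + 1) = M + k + 1 by omega,
      Nat.choose_succ_succ, Nat.cast_add, add_mul]
    refine (div_le_self (abs_nonneg _) (by linarith)).trans ((abs_add_le _ _).trans ?_)
    rw [abs_mul, abs_pow, abs_neg, abs_of_nonneg hx, Nat.abs_cast]
    exact add_le_add_left ih _

/-- The `n`-th summand of `E^p_k(a)`, with `b = b_n`. -/
noncomputable def rearrangementCoeff (p k : ℕ) (a b : ℝ) : ℝ :=
  (-1) ^ k / (k : ℝ) * a ^ k / (a + b) ^ k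
    - ∑ j ∈ Icc k p, (-1) ^ j / (j : ℝ) * (j.choose k) * a ^ j / b ^ j

theorem rearrangementCoeff_eq_div_one (p k : ℕ) (a : ℝ) {b : ℝ} (hb : b ≠ 0) :
    rearrangementCoeff p k a b = rearrangementCoeff p k (a / b) 1 := by
  have hab : a / b + 1 = (a + b) / b := by field_simp
  simp only [rearrangementCoeff, hab, div_pow, one_pow, div_one]
  congr 1
  · field_simp
  · simp only [mul_div_assoc]

theorem rearrangementCoeff_eq_mul_remainder (i M : ℕ) (x : ℝ) :
    rearrangementCoeff (i + M) (i + 1) x 1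
      = (-1) ^ (i + 1) * (x ^ (i + 1) / (i + 1))
          * (((1 + x) ^ (i + 1))⁻¹ - ∑ m ∈ range M, ((m + i).choose i : ℝ) * (-x) ^ m) := by
  have hsum :
      ∑ j ∈ Icc (i + 1) (i + M), (-1) ^ j / (j : ℝ) * (j.choose (i + 1)) * x ^ j / 1 ^ j
      = ∑ m ∈ range M, (-1) ^ (i + 1) * (x ^ (i + 1) / (i + 1))
          * (((m + i).choose i : ℝ) * (-x) ^ m) := by
    rw [← Ico_add_one_right_eq_Icc, sum_Ico_eq_sum_range,
      show i + M + 1 - (i + 1) = M by omega]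
    refine sum_congr rfl fun m _ => ?_
    have hchoose := congrArg (Nat.cast (R := ℝ)) (Nat.add_one_mul_choose_eq (m + i) i)
    rw [show i + 1 + m = m + i + 1 by omega]
    push_cast at hchoose ⊢
    field_simp
    rw [neg_pow, pow_add]
    linear_combination (-1) ^ i * (-1) ^ m * x ^ i * x ^ m * x * hchoose
  rw [rearrangementCoeff, hsum, ← mul_sum, add_comm x 1]
  push_cast
  ring

theorem abs_rearrangementCoeff_one_le {p k : ℕ} (hk : 1 ≤ k) (hkp : k ≤ p) {x : ℝ}
    (hx : 0 ≤ x) :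
    |rearrangementCoeff p k x 1| ≤ p.choose (k - 1) / k * x ^ (p + 1) := by
  obtain ⟨i, rfl⟩ : ∃ i, k = i + 1 := ⟨k - 1, by omega⟩
  obtain ⟨M, rfl⟩ : ∃ M, p = i + M := ⟨p - i, by omega⟩
  rw [rearrangementCoeff_eq_mul_remainder, abs_mul, abs_mul, abs_pow, abs_neg, abs_one, one_pow,
    one_mul, abs_div, abs_pow, abs_of_nonneg hx, abs_of_pos (by positivity : (0 : ℝ) < i + 1)]
  calc x ^ (i + 1) / (i + 1)
        * |((1 + x) ^ (i + 1))⁻¹ - ∑ m ∈ range M, ((m + i).choose i : ℝ) * (-x) ^ m|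
      ≤ x ^ (i + 1) / (i + 1) * ((M + i).choose i * x ^ M) := by
        gcongr
        exact abs_inv_one_add_pow_sub_sum_le i M hx
    _ = (i + M).choose (i + 1 - 1) / ((i + 1 : ℕ) : ℝ) * x ^ (i + M + 1) := by
        rw [add_comm M i, Nat.add_sub_cancel]
        push_cast
        ring

theorem summable_rearrangementCoeff {b : ℕ → ℝ} (hb : ∀ n, 0 < b n) {p k : ℕ}
    (hsum : Summable fun n => 1 / b n ^ (p + 1)) {a : ℝ} (ha : 0 ≤ a) (hk : 1 ≤ k)
    (hkp : k ≤ p) :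
    Summable fun n => rearrangementCoeff p k a (b n) := by
  refine (hsum.mul_left (p.choose (k - 1) / k * a ^ (p + 1))).of_norm_bounded fun n => ?_
  rw [Real.norm_eq_abs, rearrangementCoeff_eq_div_one p k a (hb n).ne']
  refine (abs_rearrangementCoeff_one_le hk hkp (div_nonneg ha (hb n).le)).trans_eq ?_
  rw [div_pow]
  ring

theorem sum_mul_pow_eq_sum_rearrangementCoeff_mul_pow (p : ℕ) (a b z : ℝ) :
    ∑ j ∈ Icc 1 p, (-1) ^ j / (j : ℝ) * a ^ j
        * (z ^ j / (a + b) ^ j - (1 + z) ^ j / b ^ j + 1 / b ^ j)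
      = ∑ k ∈ Icc 1 p, rearrangementCoeff p k a b * z ^ k := by
  have hbinom : ∀ j, (1 + z) ^ j = 1 + ∑ k ∈ Icc 1 j, (j.choose k : ℝ) * z ^ k := fun j => by
    rw [add_comm 1 z, add_pow, sum_range_succ', ← Ico_add_one_right_eq_Icc,
      sum_Ico_eq_sum_range]
    simp [add_comm, mul_comm]
  have hswap := sum_Ico_Ico_comm 1 (p + 1)
    fun k j => (-1) ^ j / (j : ℝ) * (j.choose k) * a ^ j / b ^ j * z ^ k
  simp only [Ico_add_one_right_eq_Icc] at hswap
  simp only [rearrangementCoeff, sub_mul, sum_sub_distrib, sum_mul, hswap, hbinom]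
  rw [← sum_sub_distrib]
  refine sum_congr rfl fun j _ => ?_
  calc _ = (-1) ^ j / (j : ℝ) * a ^ j / (a + b) ^ j * z ^ j
        - (-1) ^ j / (j : ℝ) * a ^ j / b ^ j * ∑ k ∈ Icc 1 j, (j.choose k : ℝ) * z ^ k := by
          ring
    _ = _ := by
      rw [mul_sum]
      exact congrArg _ (sum_congr rfl fun k _ => by ring)

theorem spectral_rearrangement_general (b : ℕ → ℝ) (hb : ∀ n, 0 < b n) (p : ℕ)
    (hsum : Summable fun n => 1 / (b n) ^ (p + 1)) (a : ℝ) (ha : 0 < a) (z : ℝ) :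
    ∑' n, ∑ j ∈ Finset.Icc 1 p, (-1) ^ j / (j : ℝ) * a ^ j *
        (z ^ j / (a + b n) ^ j - (1 + z) ^ j / (b n) ^ j + 1 / (b n) ^ j)
      = ∑ k ∈ Finset.Icc 1 p,
          (∑' n, ((-1) ^ k / (k : ℝ) * a ^ k / (a + b n) ^ k
            - ∑ j ∈ Finset.Icc k p, (-1) ^ j / (j : ℝ) * (j.choose k) * a ^ j / (b n) ^ j))
            * z ^ k := by
  have hsummable : ∀ k ∈ Icc 1 p, Summable fun n => rearrangementCoeff p k a (b n) * z ^ k :=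
    fun k hk => (summable_rearrangementCoeff hb hsum ha.le (mem_Icc.1 hk).1
      (mem_Icc.1 hk).2).mul_right _
  simp only [sum_mul_pow_eq_sum_rearrangementCoeff_mul_pow]
  rw [Summable.tsum_finsetSum hsummable]
  exact sum_congr rfl fun k _ => tsum_mul_right

/-- Polynomial rearrangement lemma for the coefficients `E^p_k(a)`. -/
theorem spectral_rearrangement (b : ℕ → ℝ) (hb : ∀ n, 0 < b n) (p : ℕ) (hp : 0 < p)
    (hsum : Summable fun n => 1 / (b n) ^ (p + 1)) (a : ℝ) (ha : 0 < a) (z : ℝ) :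
    ∑' n, ∑ j ∈ Finset.Icc 1 p, (-1) ^ j / (j : ℝ) * a ^ j *
        (z ^ j / (a + b n) ^ j - (1 + z) ^ j / (b n) ^ j + 1 / (b n) ^ j)
      = ∑ k ∈ Finset.Icc 1 p,
          (∑' n, ((-1) ^ k / (k : ℝ) * a ^ k / (a + b n) ^ k
            - ∑ j ∈ Finset.Icc k p, (-1) ^ j / (j : ℝ) * (j.choose k) * a ^ j / (b n) ^ j))
            * z ^ k :=
  spectral_rearrangement_general b hb p hsum a ha z
end

section
/- Assume the generalized Kronecker limit formula holds, i.e. ζ(s, S + yS) is regular at s=0 with expansion ζ(s, S+yS) = ζ(0,S+yS) − ( ζ(0,S+yS) log y + log η(i√y, S) ) s + O(s²) for all y > 0, and assume the twist symmetry ζ(s,S+yS) = y^{-s}ζ(s,S+(1/y)S) for all y > 0. Then the generalized Dedekind eta function satisfies the functional equation η(i/y, S) = y^{2 ζ(0, S + y² S)} η(iy, S) for all y > 0. -/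
/-- Functional equation of the generalized Dedekind eta function:
`η(i/y, S) = y^{2ζ(0,S+y²S)} η(iy, S)`, assuming the generalized Kronecker limit formula
(`ζ'(0,S+aS) = −ζ(0,S+aS) log a − log η(i√a,S)`) and the twist symmetry
`ζ(s,S+yS) = y^{-s} ζ(s,S+(1/y)S)` near `s = 0`.
Here `Z a = ζ(·, S+aS)` and `H y = η(iy, S)`. -/
theorem generalized_eta_functional_equation (Z : ℝ → ℂ → ℂ) (H : ℝ → ℝ)
    (hH : ∀ y > (0 : ℝ), 0 < H y)
    (han : ∀ y > (0 : ℝ), AnalyticAt ℂ (Z y) 0)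
    (hKron : ∀ y > (0 : ℝ),
      deriv (Z y) 0 = -(Z y 0 * (Real.log y : ℂ)) - (Real.log (H (Real.sqrt y)) : ℂ))
    (htwist : ∀ y > (0 : ℝ), Z y =ᶠ[nhds 0] fun s => (y : ℂ) ^ (-s) * Z (1 / y) s)
    (y : ℝ) (hy : 0 < y) :
    (H (1 / y) : ℂ) = (y : ℂ) ^ (2 * Z (y ^ 2) 0) * (H y : ℂ) := by
  set a : ℝ := y ^ 2 with ha_def
  have ha : (0 : ℝ) < a := by positivity
  have ha' : (0 : ℝ) < 1 / a := by positivity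
  have haC : (a : ℂ) ≠ 0 := by exact_mod_cast ha.ne'
  -- value at 0 from twist
  have htw := htwist a ha
  have hZ0 : Z a 0 = Z (1 / a) 0 := by
    have := htw.eq_of_nhds
    simpa using this
  -- derivative of the RHS of the twist
  have hdiff : DifferentiableAt ℂ (Z (1 / a)) 0 := (han (1 / a) ha').differentiableAt
  have hderiv1 : HasDerivAt (fun s : ℂ => (a : ℂ) ^ (-s) * Z (1 / a) s)
      ((a : ℂ) ^ (-(0:ℂ)) * Complex.log a * (-1) * Z (1 / a) 0
        + (a : ℂ) ^ (-(0:ℂ)) * deriv (Z (1 / a)) 0) 0 := by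
    exact (((hasDerivAt_neg (0 : ℂ)).const_cpow (Or.inl haC))).mul hdiff.hasDerivAt
  have hderiv2 : deriv (Z a) 0
      = (a : ℂ) ^ (-(0:ℂ)) * Complex.log a * (-1) * Z (1 / a) 0
        + (a : ℂ) ^ (-(0:ℂ)) * deriv (Z (1 / a)) 0 := by
    rw [htw.deriv_eq]
    exact hderiv1.deriv
  simp only [neg_zero, Complex.cpow_zero, one_mul, mul_neg_one, mul_one] at hderiv2
  -- Kronecker for a and 1/a
  have hsq : Real.sqrt a = y := by rw [ha_def]; exact Real.sqrt_sq hy.le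
  have hsq' : Real.sqrt (1 / a) = 1 / y := by
    rw [ha_def, one_div, one_div, Real.sqrt_inv, Real.sqrt_sq hy.le]
  have hK1 := hKron a ha
  have hK2 := hKron (1 / a) ha'
  rw [hsq] at hK1
  rw [hsq'] at hK2
  have hloginv : Real.log (1 / a) = -Real.log a := by
    rw [one_div, Real.log_inv]
  rw [hloginv] at hK2
  have hlogC : Complex.log (a : ℂ) = (Real.log a : ℂ) := (Complex.ofReal_log ha.le).symm
  rw [hK1, hK2, hlogC, ← hZ0] at hderiv2
  -- solve for log H (1/y)
  have key : (Real.log (H (1 / y)) : ℂ)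
      = Z a 0 * (Real.log a : ℂ) + (Real.log (H y) : ℂ) := by
    push_cast at hderiv2 ⊢
    linear_combination hderiv2
  -- exponentiate
  have hHy := hH y hy
  have hH1y := hH (1 / y) (by positivity)
  have hloga : (Real.log a : ℂ) = 2 * (Real.log y : ℂ) := by
    rw [ha_def]
    push_cast [Real.log_pow]
    ring
  have : (H (1 / y) : ℂ) = Complex.exp (2 * Z a 0 * (Real.log y : ℂ)) * (H y : ℂ) := by
    rw [Complex.ofReal_log hH1y.le, Complex.ofReal_log hHy.le] at key
    rw [← Complex.exp_log (by exact_mod_cast hH1y.ne' : (H (1/y) : ℂ) ≠ 0),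
      ← Complex.exp_log (by exact_mod_cast hHy.ne' : (H y : ℂ) ≠ 0), ← Complex.exp_add,
      key, hloga]
    ring_nf
  rw [this]
  congr 1
  rw [Complex.cpow_def_of_ne_zero (by exact_mod_cast hy.ne' : (y : ℂ) ≠ 0),
    ← Complex.ofReal_log hy.le]
  ring_nf
end
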